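/- Let Q_1, ..., Q_K be probability measures on a countable space Ω and ψ : Ω → Fin K any function. For the star graph centered at vertex k, (1/K)·∑_{i=1}^K Q_i(ψ ≠ i) ≥ (1/K)·∑_{l ≠ k} ∑_{ω ∈ Ω} min(Q_k(ω), Q_l(ω)). -/
import Mathlib

open MeasureTheory

/-- Star-graph test lemma: for probability measures `Q_1,…,Q_K` on a countable space and any
test `ψ`, `(1/K)∑_i Q_i(ψ ≠ i) ≥ (1/K)∑_{l ≠ k} ∑_ω min(Q_k(ω), Q_l(ω))`. -/
theorem stmt14 {Ω : Type*} [Countable Ω] [MeasurableSpace Ω] [MeasurableSingletonClass Ω]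
    (K : ℕ) (Q : Fin K → Measure Ω) [∀ i, IsProbabilityMeasure (Q i)]
    (ψ : Ω → Fin K) (k : Fin K) :
    (1 / K) * ∑ l ∈ Finset.univ \ {k}, ∑' ω, min (Q k {ω}).toReal (Q l {ω}).toReal
      ≤ (1 / K) * ∑ i, (Q i {ω | ψ ω ≠ i}).toReal := by
  have hmeas : ∀ s : Set Ω, MeasurableSet s := fun s => s.to_countable.measurableSet
  -- key per-edge bound in ℝ≥0∞
  have key : ∀ l : Fin K, (∑' ω, min (Q k {ω}) (Q l {ω}))
      ≤ Q k {ω | ψ ω = l} + Q l {ω | ψ ω ≠ l} := by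
    intro l
    have h1 : ∀ ω, min (Q k {ω}) (Q l {ω}) ≤
        Set.indicator {ω | ψ ω = l} (fun ω => Q k {ω}) ω
        + Set.indicator {ω | ψ ω ≠ l} (fun ω => Q l {ω}) ω := by
      intro ω
      by_cases h : ψ ω = l
      · simp [Set.indicator_apply, h, min_le_left]
      · simp [Set.indicator_apply, h, min_le_right]
    calc ∑' ω, min (Q k {ω}) (Q l {ω})
        ≤ ∑' ω, (Set.indicator {ω | ψ ω = l} (fun ω => Q k {ω}) ω
          + Set.indicator {ω | ψ ω ≠ l} (fun ω => Q l {ω}) ω) := ENNReal.tsum_le_tsum h1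
      _ = Q k {ω | ψ ω = l} + Q l {ω | ψ ω ≠ l} := by
          rw [ENNReal.tsum_add, (Q k).tsum_indicator_apply_singleton _ (hmeas _),
            (Q l).tsum_indicator_apply_singleton _ (hmeas _)]
  -- main inequality in ℝ≥0∞
  have main : ∑ l ∈ Finset.univ \ {k}, (∑' ω, min (Q k {ω}) (Q l {ω}))
      ≤ ∑ i, Q i {ω | ψ ω ≠ i} := by
    have hsplit : (∑ l ∈ Finset.univ \ {k}, Q k {ω | ψ ω = l}) = Q k {ω | ψ ω ≠ k} := by
      rw [← measure_biUnion_finset ?_ (fun _ _ => hmeas _)]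
      · congr 1
        ext ω
        simp [Finset.mem_sdiff]
      · intro a _ b hb hab
        simp only [Function.onFun, Set.disjoint_left, Set.mem_setOf_eq]
        intro ω h1 h2
        exact hab (h1 ▸ h2 ▸ rfl)
    calc ∑ l ∈ Finset.univ \ {k}, (∑' ω, min (Q k {ω}) (Q l {ω}))
        ≤ ∑ l ∈ Finset.univ \ {k}, (Q k {ω | ψ ω = l} + Q l {ω | ψ ω ≠ l}) :=
          Finset.sum_le_sum fun l _ => key l
      _ = (∑ l ∈ Finset.univ \ {k}, Q k {ω | ψ ω = l})
          + ∑ l ∈ Finset.univ \ {k}, Q l {ω | ψ ω ≠ l} := Finset.sum_add_distrib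
      _ = Q k {ω | ψ ω ≠ k} + ∑ l ∈ Finset.univ \ {k}, Q l {ω | ψ ω ≠ l} := by rw [hsplit]
      _ = ∑ i, Q i {ω | ψ ω ≠ i} := by
          rw [Finset.sdiff_singleton_eq_erase]
          exact Finset.add_sum_erase _ (fun l => Q l {ω | ψ ω ≠ l}) (Finset.mem_univ k)
  -- pass to real numbers
  have hne : ∀ l : Fin K, (∑' ω, min (Q k {ω}) (Q l {ω})) ≠ ⊤ := fun l =>
    ((key l).trans_lt (ENNReal.add_lt_top.2 ⟨measure_lt_top _ _, measure_lt_top _ _⟩)).ne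
  have hmin_eq : ∀ (l : Fin K) (ω : Ω),
      min (Q k {ω}).toReal (Q l {ω}).toReal = (min (Q k {ω}) (Q l {ω})).toReal := by
    intro l ω
    rcases le_total (Q k {ω}) (Q l {ω}) with h | h
    · rw [min_eq_left h, min_eq_left
        ((ENNReal.toReal_le_toReal (measure_ne_top _ _) (measure_ne_top _ _)).2 h)]
    · rw [min_eq_right h, min_eq_right
        ((ENNReal.toReal_le_toReal (measure_ne_top _ _) (measure_ne_top _ _)).2 h)]
  have hL : (∑ l ∈ Finset.univ \ {k}, ∑' ω, min (Q k {ω}).toReal (Q l {ω}).toReal)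
      = (∑ l ∈ Finset.univ \ {k}, ∑' ω, min (Q k {ω}) (Q l {ω})).toReal := by
    rw [ENNReal.toReal_sum (fun l _ => hne l)]
    refine Finset.sum_congr rfl fun l _ => ?_
    rw [ENNReal.tsum_toReal_eq fun ω =>
      ne_top_of_le_ne_top (measure_ne_top (Q k) {ω}) (min_le_left _ _)]
    exact tsum_congr fun ω => hmin_eq l ω
  have hR : (∑ i, (Q i {ω | ψ ω ≠ i}).toReal) = (∑ i, Q i {ω | ψ ω ≠ i}).toReal :=
    (ENNReal.toReal_sum fun i _ => measure_ne_top _ _).symm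
  rw [hL, hR]
  refine mul_le_mul_of_nonneg_left ?_ (by positivity)
  exact ENNReal.toReal_mono (ENNReal.sum_ne_top.2 fun i _ => measure_ne_top _ _) main
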